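/- For the twisted two-term complex 0 → A → Ω¹_{A/k} → 0 on the punctured elliptic curve with twisting parameter ω = dx/y, the zeroth twisted cohomology H⁰_ω(X/k) = ker(d_ω: A → Ω¹) is zero: for f ∈ A, the equation df + f·ω = 0 forces f = 0. -/

import Mathlib

open MvPolynomial

/-- The defining relation `y² - (4x³ - g₂ x - g₃)` of the (affine) elliptic curve. -/
noncomputable abbrev ellipticRel (k : Type*) [CommRing k] (g₂ g₃ : k) :
    MvPolynomial (Fin 2) k :=
  X 1 ^ 2 - (4 * X 0 ^ 3 - C g₂ * X 0 - C g₃)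

/-- The affine coordinate ring `A = k[x,y]/(y² - (4x³ - g₂x - g₃))`. -/
abbrev EllipticRing (k : Type*) [CommRing k] (g₂ g₃ : k) : Type _ :=
  MvPolynomial (Fin 2) k ⧸ Ideal.span {ellipticRel k g₂ g₃}

/-!
Multiplying `dg + g ω = 0` by `y` removes `ω`: `y dg + g dx = 0`. Evaluate this on the derivation
`∂` of `A` with `∂x = 2y`, `∂y = f'(x)` (the vector field dual to `dx/y`, up to the factor `2`):
`y (∂g + 2g) = 0`, and `y` is a nonzerodivisor, so `∂g = -2g`. Now `A` is free over `k[x]` with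
basis `1, y`; writing `g = a(x) + b(x) y` and using `y² = f(x)`, the equation `∂g = -2g` reads
`b = -a'` and `2a = 2 f a'' + f' a'`. Since `deg f = 3`, the right-hand side has degree
`deg a + 1` unless `a` is constant, whence `a' = 0` and then `a = 0`.
-/

namespace Polynomial

theorem eq_zero_of_two_mul_eq_of_natDegree_eq_three {R : Type*} [CommRing R] [IsDomain R]
    [CharZero R] {f a : R[X]} (hf : f.natDegree = 3)
    (h : 2 * a = 2 * f * derivative (derivative a) + derivative f * derivative a) : a = 0 := by
  suffices ha' : derivative a = 0 by simpa [ha'] using h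
  by_contra ha'
  set n := (derivative a).natDegree with hn
  have ha : a.natDegree = n + 1 := by
    rw [hn, natDegree_derivative]; have := derivative_ne_zero.mp ha'; omega
  have ha₂ : a.coeff (n + 2) = 0 := coeff_eq_zero_of_natDegree_lt (by omega)
  have hf' : (derivative f).natDegree ≤ 2 := by rw [natDegree_derivative, hf]
  -- the right-hand side is `2 (a' f)' - a' f'`, whose coefficient of `X ^ (n + 2)` is nonzero
  have h' : 2 * a = 2 * derivative (derivative a * f) - derivative a * derivative f := by
    rw [h, derivative_mul]; ring
  have hcoeff := congrArg (coeff · (n + 2)) h'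
  simp only [coeff_ofNat_mul, coeff_sub, ha₂, coeff_derivative _ (n + 2),
    coeff_mul_add_eq_of_natDegree_le hn.ge hf.le, coeff_mul_add_eq_of_natDegree_le hn.ge hf',
    coeff_derivative _ n, coeff_derivative f 2] at hcoeff
  have : a.leadingCoeff * f.leadingCoeff * ((n + 1) * (2 * n + 3) : ℕ) = 0 := by
    rw [leadingCoeff, leadingCoeff, hf, ha]; push_cast at hcoeff ⊢; linear_combination -hcoeff
  simp only [mul_eq_zero, leadingCoeff_eq_zero, Nat.cast_eq_zero] at this
  rcases this with (rfl | rfl) | hn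
  · simp at ha'
  · simp at hf
  · omega

end Polynomial

open scoped Polynomial

namespace AdjoinRoot

variable {R : Type*} [CommRing R] (r : R)

theorem root_sq : root (Polynomial.X ^ 2 - Polynomial.C r) ^ 2 = of _ r := by
  have h := eval₂_root (Polynomial.X ^ 2 - Polynomial.C r)
  rwa [Polynomial.eval₂_sub, Polynomial.eval₂_X_pow, Polynomial.eval₂_C, sub_eq_zero] at h

variable [Nontrivial R]

theorem exists_of_add_of_mul_root_eq (z : AdjoinRoot (Polynomial.X ^ 2 - Polynomial.C r)) :
    ∃ a b : R, of _ a + of _ b * root _ = z := by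
  have hq := Polynomial.monic_X_pow_sub_C r two_ne_zero
  obtain ⟨p, rfl⟩ := mk_surjective z
  have hs : (p %ₘ (Polynomial.X ^ 2 - Polynomial.C r)).natDegree < 2 := by
    simpa [Polynomial.natDegree_X_pow_sub_C] using
      Polynomial.natDegree_modByMonic_lt p hq (ne_of_apply_ne Polynomial.natDegree (by simp))
  rw [← mk_leftInverse hq (mk _ p), modByMonicHom_mk]
  generalize p %ₘ _ = s at hs ⊢
  refine ⟨s.coeff 0, s.coeff 1, ?_⟩
  conv_rhs => rw [Polynomial.eq_X_add_C_of_natDegree_le_one (Nat.le_of_lt_succ hs)]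
  simp only [map_add, map_mul, mk_C, mk_X]
  ring

theorem eq_zero_of_of_add_of_mul_root_eq_zero {a b : R}
    (h : of (Polynomial.X ^ 2 - Polynomial.C r) a + of _ b * root _ = 0) : a = 0 ∧ b = 0 := by
  have hp : Polynomial.C b * Polynomial.X + Polynomial.C a = 0 := by
    by_contra hp
    refine mk_ne_zero_of_degree_lt (Polynomial.monic_X_pow_sub_C r two_ne_zero) hp ?_ ?_
    · rw [Polynomial.degree_X_pow_sub_C two_pos]; exact Polynomial.degree_linear_lt
    · simpa [add_comm, mk_C] using h
  exact ⟨by simpa using congrArg (Polynomial.coeff · 0) hp,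
    by simpa using congrArg (Polynomial.coeff · 1) hp⟩

end AdjoinRoot

namespace EllipticRing

variable {k : Type*} [Field k] (g₂ g₃ : k)

noncomputable def cubic : k[X] :=
  Polynomial.C 4 * Polynomial.X ^ 3 - Polynomial.C g₂ * Polynomial.X - Polynomial.C g₃

theorem natDegree_cubic [CharZero k] : (cubic g₂ g₃).natDegree = 3 := by
  unfold cubic; compute_degree!

theorem ellipticRel_eq :
    ellipticRel k g₂ g₃ = X 1 ^ 2 - Polynomial.aeval (X 0) (cubic g₂ g₃) := by
  simp only [cubic, map_sub, map_mul, map_pow, Polynomial.aeval_C, Polynomial.aeval_X, map_ofNat,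
    MvPolynomial.algebraMap_eq]

theorem mk_ellipticRel :
    Ideal.Quotient.mk (Ideal.span {ellipticRel k g₂ g₃}) (ellipticRel k g₂ g₃) = 0 :=
  Ideal.Quotient.eq_zero_iff_mem.mpr (Ideal.subset_span rfl)

noncomputable def x : EllipticRing k g₂ g₃ := Ideal.Quotient.mk _ (X 0)

noncomputable def y : EllipticRing k g₂ g₃ := Ideal.Quotient.mk _ (X 1)

theorem y_sq : y g₂ g₃ ^ 2 = Polynomial.aeval (x g₂ g₃) (cubic g₂ g₃) := by
  rw [← sub_eq_zero, x, y, ← Ideal.Quotient.mkₐ_eq_mk k, Polynomial.aeval_algHom_apply,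
    ← map_pow, ← map_sub, ← ellipticRel_eq]
  exact mk_ellipticRel g₂ g₃

noncomputable def toAdjoinRoot :
    EllipticRing k g₂ g₃ →ₐ[k] AdjoinRoot (Polynomial.X ^ 2 - Polynomial.C (cubic g₂ g₃)) :=
  Ideal.Quotient.liftₐ _ (aeval ![AdjoinRoot.of _ Polynomial.X, AdjoinRoot.root _]) <| by
    intro p hp
    obtain ⟨q, rfl⟩ := Ideal.mem_span_singleton'.mp hp
    rw [map_mul, ellipticRel_eq, map_sub, map_pow, ← Polynomial.aeval_algHom_apply]
    simp [← AdjoinRoot.algebraMap_eq, Polynomial.aeval_algebraMap_apply, AdjoinRoot.root_sq]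

theorem toAdjoinRoot_mk (p : MvPolynomial (Fin 2) k) :
    toAdjoinRoot g₂ g₃ (Ideal.Quotient.mk _ p) =
      aeval ![AdjoinRoot.of _ Polynomial.X, AdjoinRoot.root _] p :=
  Ideal.Quotient.liftₐ_apply _ _ _ _

noncomputable def ofAdjoinRoot :
    AdjoinRoot (Polynomial.X ^ 2 - Polynomial.C (cubic g₂ g₃)) →ₐ[k] EllipticRing k g₂ g₃ :=
  AdjoinRoot.liftAlgHom _ (Polynomial.aeval (x g₂ g₃)) (y g₂ g₃) <| by
    simp [y_sq]

theorem ofAdjoinRoot_toAdjoinRoot (g : EllipticRing k g₂ g₃) :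
    ofAdjoinRoot g₂ g₃ (toAdjoinRoot g₂ g₃ g) = g := by
  suffices (ofAdjoinRoot g₂ g₃).comp (toAdjoinRoot g₂ g₃) = AlgHom.id k _ from
    congr($this g)
  refine Ideal.Quotient.algHom_ext _ (MvPolynomial.algHom_ext fun i => ?_)
  fin_cases i <;> simp [toAdjoinRoot_mk, ofAdjoinRoot, x, y]

theorem toAdjoinRoot_aeval_x (a : k[X]) :
    toAdjoinRoot g₂ g₃ (Polynomial.aeval (x g₂ g₃) a) = AdjoinRoot.of _ a := by
  rw [← Polynomial.aeval_algHom_apply]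
  simp [toAdjoinRoot_mk, x, ← AdjoinRoot.algebraMap_eq, Polynomial.aeval_algebraMap_apply]

theorem toAdjoinRoot_y : toAdjoinRoot g₂ g₃ (y g₂ g₃) = AdjoinRoot.root _ := by
  simp [toAdjoinRoot_mk, y]

theorem exists_aeval_x_add_aeval_x_mul_y_eq (g : EllipticRing k g₂ g₃) :
    ∃ a b : k[X], Polynomial.aeval (x g₂ g₃) a + Polynomial.aeval (x g₂ g₃) b * y g₂ g₃ = g := by
  obtain ⟨a, b, h⟩ := AdjoinRoot.exists_of_add_of_mul_root_eq _ (toAdjoinRoot g₂ g₃ g)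
  refine ⟨a, b, ?_⟩
  rw [← ofAdjoinRoot_toAdjoinRoot g₂ g₃ g, ← h]
  simp [ofAdjoinRoot]

theorem eq_zero_of_aeval_x_add_aeval_x_mul_y_eq_zero {a b : k[X]}
    (h : Polynomial.aeval (x g₂ g₃) a + Polynomial.aeval (x g₂ g₃) b * y g₂ g₃ = 0) :
    a = 0 ∧ b = 0 :=
  AdjoinRoot.eq_zero_of_of_add_of_mul_root_eq_zero _ <| by
    simpa [toAdjoinRoot_aeval_x, toAdjoinRoot_y] using congrArg (toAdjoinRoot g₂ g₃) h

theorem eq_zero_of_y_mul_eq_zero [CharZero k] {w : EllipticRing k g₂ g₃} (h : y g₂ g₃ * w = 0) :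
    w = 0 := by
  obtain ⟨a, b, rfl⟩ := exists_aeval_x_add_aeval_x_mul_y_eq g₂ g₃ w
  have hcubic : cubic g₂ g₃ ≠ 0 :=
    Polynomial.ne_zero_of_natDegree_gt (natDegree_cubic g₂ g₃ ▸ three_pos)
  obtain ⟨hb, rfl⟩ := eq_zero_of_aeval_x_add_aeval_x_mul_y_eq_zero g₂ g₃
    (a := cubic g₂ g₃ * b) (b := a) <| by
    rw [← h, map_mul, ← y_sq]; ring
  simp [(mul_eq_zero.mp hb).resolve_left hcubic]

/-- The vector field `2y ∂/∂x + f'(x) ∂/∂y` on the plane, tangent to the curve. -/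
noncomputable def planeDerivation :
    Derivation k (MvPolynomial (Fin 2) k) (MvPolynomial (Fin 2) k) :=
  mkDerivation k ![2 * X 1, Polynomial.aeval (X 0) (Polynomial.derivative (cubic g₂ g₃))]

theorem planeDerivation_ellipticRel : planeDerivation g₂ g₃ (ellipticRel k g₂ g₃) = 0 := by
  rw [planeDerivation, ellipticRel_eq, map_sub, Derivation.leibniz_pow, Derivation.map_aeval,
    mkDerivation_X, mkDerivation_X]
  simp only [Fin.isValue, Matrix.cons_val_zero, Matrix.cons_val_one, smul_eq_mul]
  ring

theorem mk_planeDerivation_eq_zero {p : MvPolynomial (Fin 2) k}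
    (hp : Ideal.Quotient.mkₐ k (Ideal.span {ellipticRel k g₂ g₃}) p = 0) :
    Ideal.Quotient.mkₐ k (Ideal.span {ellipticRel k g₂ g₃}) (planeDerivation g₂ g₃ p) = 0 := by
  obtain ⟨q, rfl⟩ := Ideal.mem_span_singleton'.mp (Ideal.Quotient.eq_zero_iff_mem.mp hp)
  rw [Derivation.leibniz, planeDerivation_ellipticRel, smul_zero, zero_add, smul_eq_mul, map_mul,
    Ideal.Quotient.mkₐ_eq_mk, mk_ellipticRel, zero_mul]

noncomputable def invariantDerivation :
    Derivation k (EllipticRing k g₂ g₃) (EllipticRing k g₂ g₃) :=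
  Derivation.liftOfSurjective (Ideal.Quotient.mkₐ_surjective k _)
    fun _ => mk_planeDerivation_eq_zero g₂ g₃

theorem invariantDerivation_mk (p : MvPolynomial (Fin 2) k) :
    invariantDerivation g₂ g₃ (Ideal.Quotient.mk _ p) =
      Ideal.Quotient.mk _ (planeDerivation g₂ g₃ p) :=
  Derivation.liftOfSurjective_apply (Ideal.Quotient.mkₐ_surjective k _)
    (fun _ => mk_planeDerivation_eq_zero g₂ g₃) p

theorem invariantDerivation_x : invariantDerivation g₂ g₃ (x g₂ g₃) = 2 * y g₂ g₃ := by
  rw [x, invariantDerivation_mk, planeDerivation, mkDerivation_X]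
  simp only [Fin.isValue, Matrix.cons_val_zero, map_mul, map_ofNat]
  rfl

theorem invariantDerivation_y :
    invariantDerivation g₂ g₃ (y g₂ g₃) =
      Polynomial.aeval (x g₂ g₃) (Polynomial.derivative (cubic g₂ g₃)) := by
  rw [y, invariantDerivation_mk, planeDerivation, mkDerivation_X, x,
    ← Ideal.Quotient.mkₐ_eq_mk k, Polynomial.aeval_algHom_apply]
  rfl

theorem eq_zero_of_invariantDerivation_add_two_mul_eq_zero [CharZero k]
    {g : EllipticRing k g₂ g₃} (h : invariantDerivation g₂ g₃ g + 2 * g = 0) : g = 0 := by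
  obtain ⟨a, b, rfl⟩ := exists_aeval_x_add_aeval_x_mul_y_eq g₂ g₃ g
  set f := cubic g₂ g₃
  obtain ⟨h₀, h₁⟩ := eq_zero_of_aeval_x_add_aeval_x_mul_y_eq_zero g₂ g₃
    (a := b * Polynomial.derivative f + 2 * f * Polynomial.derivative b + 2 * a)
    (b := 2 * Polynomial.derivative a + 2 * b) <| by
    rw [← h]
    simp only [map_add, map_mul, Derivation.leibniz, Derivation.map_aeval, invariantDerivation_x,
      invariantDerivation_y, smul_eq_mul, map_ofNat]
    linear_combination (-2 * Polynomial.aeval (x g₂ g₃) (Polynomial.derivative b)) * y_sq g₂ g₃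
  have hb : b = -Polynomial.derivative a :=
    mul_left_cancel₀ (two_ne_zero : (2 : k[X]) ≠ 0) (by linear_combination h₁)
  rw [hb, Polynomial.derivative_neg] at h₀
  have ha : a = 0 :=
    Polynomial.eq_zero_of_two_mul_eq_of_natDegree_eq_three (natDegree_cubic g₂ g₃)
      (by linear_combination h₀)
  simp [hb, ha]

end EllipticRing

theorem elliptic_twisted_H0_zero_general
    {k : Type*} [Field k] [CharZero k] (g₂ g₃ : k)
    (x y : EllipticRing k g₂ g₃)
    (hx : x = Ideal.Quotient.mk (Ideal.span {ellipticRel k g₂ g₃}) (X 0))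
    (hy : y = Ideal.Quotient.mk (Ideal.span {ellipticRel k g₂ g₃}) (X 1))
    (ω : KaehlerDifferential k (EllipticRing k g₂ g₃))
    -- `ω = dx/y`
    (hω : y • ω = KaehlerDifferential.D k (EllipticRing k g₂ g₃) x) :
    ∀ g : EllipticRing k g₂ g₃,
      KaehlerDifferential.D k (EllipticRing k g₂ g₃) g + g • ω = 0 → g = 0 := by
  intro g hg
  replace hx : x = EllipticRing.x g₂ g₃ := hx
  replace hy : y = EllipticRing.y g₂ g₃ := hy
  -- multiplying by `y` eliminates `ω`
  have hdiff : y • KaehlerDifferential.D k _ g + g • KaehlerDifferential.D k _ x = 0 := by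
    linear_combination (norm := module) y • hg - g • hω
  have hvec := congrArg (EllipticRing.invariantDerivation g₂ g₃).liftKaehlerDifferential hdiff
  simp only [map_add, map_smul, Derivation.liftKaehlerDifferential_comp_D, map_zero,
    hx, EllipticRing.invariantDerivation_x, ← hy, smul_eq_mul] at hvec
  refine EllipticRing.eq_zero_of_invariantDerivation_add_two_mul_eq_zero g₂ g₃
    (EllipticRing.eq_zero_of_y_mul_eq_zero g₂ g₃ ?_)
  rw [← hy]
  linear_combination hvec

/-- For the twisted two-term complex `0 → A → Ω¹_{A/k} → 0` on the
punctured elliptic curve `A = k[x,y]/(y² - (4x³ - g₂x - g₃))` with twisting parameter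
`ω = dx/y` (characterized by `y • ω = dx`), the zeroth twisted cohomology
`H⁰_ω = ker(d_ω : A → Ω¹)` is zero: `dg + g • ω = 0` forces `g = 0`. -/
theorem elliptic_twisted_H0_zero
    {k : Type*} [Field k] [CharZero k] (g₂ g₃ : k)
    (hΔ : g₂ ^ 3 - 27 * g₃ ^ 2 ≠ 0)
    (x y : EllipticRing k g₂ g₃)
    (hx : x = Ideal.Quotient.mk (Ideal.span {ellipticRel k g₂ g₃}) (X 0))
    (hy : y = Ideal.Quotient.mk (Ideal.span {ellipticRel k g₂ g₃}) (X 1))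
    (ω : KaehlerDifferential k (EllipticRing k g₂ g₃))
    -- `ω = dx/y`
    (hω : y • ω = KaehlerDifferential.D k (EllipticRing k g₂ g₃) x) :
    ∀ g : EllipticRing k g₂ g₃,
      KaehlerDifferential.D k (EllipticRing k g₂ g₃) g + g • ω = 0 → g = 0 :=
  elliptic_twisted_H0_zero_general g₂ g₃ x y hx hy ω hω
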